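/- Let β, t ≥ 0 and Ψ_{β,t} be defined by Ψ_{β,t}(w) = e^{tw}+1 for w ≤ β and 2e^{tβ} - e^{t(2β-w)} + 1 for w > β. For all real w, the partial derivative in t satisfies ∂Ψ_{β,t}(w)/∂t ≤ w (Ψ_{β,t}(w) - 1). -/
import Mathlib


noncomputable def Psi (β t w : ℝ) : ℝ :=
  if w ≤ β then Real.exp (t * w) + 1
  else 2 * Real.exp (t * β) - Real.exp (t * (2 * β - w)) + 1

noncomputable def PsiT (β t w : ℝ) : ℝ :=
  if w ≤ β then w * Real.exp (t * w)
  else 2 * β * Real.exp (t * β) - (2 * β - w) * Real.exp (t * (2 * β - w))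

lemma hasDerivAt_exp_mul (c t : ℝ) :
    HasDerivAt (fun s : ℝ => Real.exp (s * c)) (c * Real.exp (t * c)) t := by
  have h := ((hasDerivAt_id t).mul_const c).exp
  simpa [mul_comm] using h

theorem Psi_deriv_t_bound (β t : ℝ) (hβ : 0 ≤ β) (ht : 0 ≤ t) (w : ℝ) :
    HasDerivAt (fun s : ℝ => Psi β s w) (PsiT β t w) t ∧
      PsiT β t w ≤ w * (Psi β t w - 1) := by
  by_cases h : w ≤ β
  · constructor
    · have := (hasDerivAt_exp_mul w t).add_const 1
      simpa [Psi, PsiT, h] using this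
    · simp [Psi, PsiT, h]
  · constructor
    · have h1 := (hasDerivAt_exp_mul β t).const_mul 2
      have h2 := hasDerivAt_exp_mul (2 * β - w) t
      have := (h1.sub h2).add_const 1
      have heq : (fun s : ℝ => Psi β s w)
          = fun s : ℝ => 2 * Real.exp (s * β) - Real.exp (s * (2 * β - w)) + 1 := by
        funext s; simp [Psi, h]
      rw [heq]
      simpa [PsiT, h, mul_comm, mul_assoc, mul_left_comm] using this
    · simp only [Psi, PsiT, if_neg h]
      have hw : β < w := not_le.mp h
      have hab : Real.exp (t * (2 * β - w)) ≤ Real.exp (t * β) :=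
        Real.exp_le_exp.mpr (by nlinarith)
      nlinarith [hab, hw]
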